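/- If a_τ < 0, Δ‖a‖ ≥ 1 + ε₀, and τ_cp ≤ τ_u, then ρ(τ_u) < ρ(−τ_Δ). -/

import Mathlib

/-! With `s = ‖a‖²`, `c = aᵀg`, `b = aᵀBa > 0`, the hypothesis `a_τ < 0` forces `c > 0`, and
`τ_cp ≤ τ_u` rewrites to `(1 + ε₀) b ≤ ε₀ s c`. At `τ_u` the denominator `1 - τ s` equals `-ε₀`, so
this bound gives `ρ(τ_u) ≤ -(1 + ε₀) c / (2 ε₀ s) < -c / s` because `ε₀ < 1`. At any negative step
`-t` the linear term exceeds `-c / s` (as `t s / (1 + t s) < 1`) and the quadratic term is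
nonnegative, so `ρ(-τ_Δ) > -c / s`. -/

open scoped RealInnerProductSpace

theorem Matrix.PosDef.inner_toEuclideanLin_self_pos {ι : Type*} [Fintype ι] [DecidableEq ι]
    {B : Matrix ι ι ℝ} (hB : B.PosDef) {x : EuclideanSpace ℝ ι} (hx : x ≠ 0) :
    0 < ⟪x, Matrix.toEuclideanLin B x⟫ := by
  have hx' : WithLp.ofLp x ≠ 0 := by simpa using hx
  simpa [EuclideanSpace.inner_eq_star_dotProduct, dotProduct_comm] using
    hB.dotProduct_mulVec_pos hx'

namespace RationalModel

noncomputable def eval (s c b τ : ℝ) : ℝ :=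
  τ * c / (1 - τ * s) + τ ^ 2 * b / (2 * (1 - τ * s) ^ 2)

variable {s c b : ℝ}

theorem neg_div_lt_eval_neg (hs : 0 < s) (hc : 0 < c) (hb : 0 ≤ b) {τ : ℝ} (hτ : 0 < τ) :
    -c / s < eval s c b (-τ) := by
  have hden : 0 < 1 + τ * s := by positivity
  have hlin : -c / s < -τ * c / (1 + τ * s) := by
    rw [neg_mul, neg_div, neg_div, neg_lt_neg_iff, div_lt_div_iff₀ hden hs]
    nlinarith
  have hquad : 0 ≤ (-τ) ^ 2 * b / (2 * (1 + τ * s) ^ 2) := by positivity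
  rw [eval, neg_mul τ s, sub_neg_eq_add]
  linarith

theorem eval_overshoot_lt {ε : ℝ} (hs : 0 < s) (hc : 0 < c) (hε : 0 < ε) (hε₁ : ε < 1)
    (hb : (1 + ε) * b ≤ ε * s * c) :
    eval s c b ((1 + ε) / s) < -c / s := by
  have hden : 1 - (1 + ε) / s * s = -ε := by field_simp; ring
  have hquad : (1 + ε) ^ 2 * b ≤ (1 + ε) * ε * s * c := by nlinarith
  calc eval s c b ((1 + ε) / s)
      = -((1 + ε) * c) / (s * ε) + (1 + ε) ^ 2 * b / (2 * s ^ 2 * ε ^ 2) := by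
        rw [eval, hden]; field_simp
    _ ≤ -((1 + ε) * c) / (s * ε) + (1 + ε) * ε * s * c / (2 * s ^ 2 * ε ^ 2) := by
        gcongr
    _ = -((1 + ε) * c) / (2 * s * ε) := by field_simp; ring
    _ < -c / s := by
        rw [neg_div, neg_div, neg_lt_neg_iff, div_lt_div_iff₀ hs (by positivity)]
        nlinarith [mul_pos hs hc]

theorem overshoot_bound_of_critical_le {ε : ℝ} (hs : 0 < s) (hcurv : b - s * c < 0)
    (hcp : -c / (b - s * c) ≤ (1 + ε) / s) :
    (1 + ε) * b ≤ ε * s * c := by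
  rw [← neg_div_neg_eq, neg_neg, neg_sub, div_le_div_iff₀ (by linarith) hs] at hcp
  nlinarith

end RationalModel

theorem stmt_13 {{n : ℕ}} (hn : 1 ≤ n)
    (a g : EuclideanSpace ℝ (Fin n)) (ha : a ≠ 0)
    (B : Matrix (Fin n) (Fin n) ℝ) (hBs : B.IsSymm) (hBpd : B.PosDef)
    (ρ : ℝ → ℝ)
    (hρ : ∀ τ : ℝ, τ ≠ 1 / ‖a‖ ^ 2 →
      ρ τ = τ * ⟪a, g⟫ / (1 - τ * ‖a‖ ^ 2)
        + τ ^ 2 * ⟪a, Matrix.toEuclideanLin B a⟫ / (2 * (1 - τ * ‖a‖ ^ 2) ^ 2))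
    (aτ τm : ℝ)
    (haτ : aτ = ⟪a, Matrix.toEuclideanLin B a⟫ - ‖a‖ ^ 2 * ⟪a, g⟫)
    (hτm : τm = 1 / ‖a‖ ^ 2)
    (τcp : ℝ) (hτcp : aτ ≠ 0 → τcp = -⟪a, g⟫ / aτ)
    (Δ ε₀ : ℝ) (hΔ : 0 < Δ) (hε₀ : 0 < ε₀) (hε₁ : ε₀ < 1)
    (τΔ τd τu : ℝ) (hτΔ : τΔ = Δ / ‖a‖) (hτd : τd = (1 - ε₀) / ‖a‖ ^ 2)
    (hτu : τu = (1 + ε₀) / ‖a‖ ^ 2)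
    (haτneg : aτ < 0) (hcase : 1 + ε₀ ≤ Δ * ‖a‖) (hle : τcp ≤ τu) :
    ρ τu < ρ (-τΔ) := by
  have hs : 0 < ‖a‖ ^ 2 := by positivity
  have hb : 0 < ⟪a, Matrix.toEuclideanLin B a⟫ := hBpd.inner_toEuclideanLin_self_pos ha
  have hcurv : ⟪a, Matrix.toEuclideanLin B a⟫ - ‖a‖ ^ 2 * ⟪a, g⟫ < 0 := haτ ▸ haτneg
  have hc : 0 < ⟪a, g⟫ := pos_of_mul_pos_right (by linarith) hs.le
  have hcp : -⟪a, g⟫ / (⟪a, Matrix.toEuclideanLin B a⟫ - ‖a‖ ^ 2 * ⟪a, g⟫) ≤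
      (1 + ε₀) / ‖a‖ ^ 2 := by
    rw [← haτ, ← hτu, ← hτcp haτneg.ne]
    exact hle
  have hbound := RationalModel.overshoot_bound_of_critical_le hs hcurv hcp
  have hτΔpos : 0 < τΔ := hτΔ ▸ div_pos hΔ (norm_pos_iff.2 ha)
  have hτu_ne : τu ≠ 1 / ‖a‖ ^ 2 := by
    rw [hτu]
    exact fun h => hε₀.ne' (by linarith [(div_left_inj' hs.ne').1 h])
  have hτΔ_ne : -τΔ ≠ 1 / ‖a‖ ^ 2 := by
    have : 0 < 1 / ‖a‖ ^ 2 := by positivity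
    intro h
    linarith
  rw [hρ τu hτu_ne, hρ (-τΔ) hτΔ_ne, hτu]
  exact (RationalModel.eval_overshoot_lt hs hc hε₀ hε₁ hbound).trans
    (RationalModel.neg_div_lt_eval_neg hs hc hb.le hτΔpos)
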